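/- arXiv:2105.11581 — 7 statements merged into one kernel-verified Lean document; each statement's English description precedes it below -/
import Mathlib

section
/- For all quantization noise variances Q1, Q2 > 0, if I1 + I3 ≤ I5 then I1 < I2, and if I1 + I3 ≤ I5 then I3 < I4 (i.e., the individual constraints I1 ≤ I2 and I3 ≤ I4 are redundant whenever the sum constraint I1 + I3 ≤ I5 is active). -/
/-- `C(x) = log(1+x)` (natural logarithm). -/
noncomputable def C (x : ℝ) : ℝ := Real.log (1 + x)

lemma C_lt_add {a b : ℝ} (ha : 0 ≤ a) (hb : 0 < b) : C a < C (a + b) := by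
  unfold C
  apply Real.log_lt_log (by linarith)
  linarith

/-- For all `Q₁, Q₂ > 0`: if `I₁ + I₃ ≤ I₅` then `I₁ < I₂`, and if `I₁ + I₃ ≤ I₅`
then `I₃ < I₄` (the individual constraints are redundant when the sum constraint
is active). -/
theorem stmt_1 (P₁ P₂ Pr α : ℝ) (M N : ℕ)
    (dd1 dd2 ddr dr1 dr2 : ℝ)
    (hP₁ : 0 < P₁) (hP₂ : 0 < P₂) (hPr : 0 < Pr) (hα : 0 < α)
    (hMN : N < M) (hN : 1 ≤ N)
    (hdd1 : 0 < dd1) (hdd2 : 0 < dd2) (hddr : 0 < ddr)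
    (hdr1 : 0 < dr1) (hdr2 : 0 < dr2) :
    ∀ Q₁ Q₂ : ℝ, 0 < Q₁ → 0 < Q₂ →
      let ζ := (N : ℝ) * C (Pr * ((M : ℝ) - N) / (N * ddr ^ α))
        - C (dr1 ^ α / (N * Q₁)) - C (dr2 ^ α / (N * Q₂))
      let I₁ := C (P₁ * ((M : ℝ) - N) / dd1 ^ α + P₁ / (dr1 ^ α / N + Q₁))
      let I₂ := C (P₁ * ((M : ℝ) - N) / dd1 ^ α) + ζ
      let I₃ := C (P₂ * ((M : ℝ) - N) / dd2 ^ α + P₂ / (dr2 ^ α / N + Q₂))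
      let I₄ := C (P₂ * ((M : ℝ) - N) / dd2 ^ α) + ζ
      let I₅ := C (P₁ * ((M : ℝ) - N) / dd1 ^ α)
        + C (P₂ * ((M : ℝ) - N) / dd2 ^ α) + ζ
      (I₁ + I₃ ≤ I₅ → I₁ < I₂) ∧ (I₁ + I₃ ≤ I₅ → I₃ < I₄) := by
  intro Q₁ Q₂ hQ₁ hQ₂
  have hMNr : (0:ℝ) < (M : ℝ) - N := by
    have : (N:ℝ) < (M:ℝ) := by exact_mod_cast hMN
    linarith
  have hNr : (0:ℝ) < (N:ℝ) := by exact_mod_cast hN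
  have hden1 : 0 < dr1 ^ α / N + Q₁ := by
    have : 0 < dr1 ^ α / N := div_pos (Real.rpow_pos_of_pos hdr1 α) hNr
    linarith
  have hden2 : 0 < dr2 ^ α / N + Q₂ := by
    have : 0 < dr2 ^ α / N := div_pos (Real.rpow_pos_of_pos hdr2 α) hNr
    linarith
  have ha1 : 0 ≤ P₁ * ((M : ℝ) - N) / dd1 ^ α :=
    le_of_lt (div_pos (mul_pos hP₁ hMNr) (Real.rpow_pos_of_pos hdd1 α))
  have ha2 : 0 ≤ P₂ * ((M : ℝ) - N) / dd2 ^ α :=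
    le_of_lt (div_pos (mul_pos hP₂ hMNr) (Real.rpow_pos_of_pos hdd2 α))
  have h1 : C (P₁ * ((M : ℝ) - N) / dd1 ^ α)
      < C (P₁ * ((M : ℝ) - N) / dd1 ^ α + P₁ / (dr1 ^ α / N + Q₁)) :=
    C_lt_add ha1 (div_pos hP₁ hden1)
  have h3 : C (P₂ * ((M : ℝ) - N) / dd2 ^ α)
      < C (P₂ * ((M : ℝ) - N) / dd2 ^ α + P₂ / (dr2 ^ α / N + Q₂)) :=
    C_lt_add ha2 (div_pos hP₂ hden2)
  exact ⟨fun h => by linarith, fun h => by linarith⟩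
end

section
/- For k ∈ {1,2}, let λ_k > 1 and set Q_k = (e_k·a_k + P_k)/(a_k·(λ_k − 1)). If λ1·λ2 = λs, then I1 + I3 = I5; that is, the sum-rate constraint of the QF-JD rate region holds with equality under this quantization choice. -/
lemma key_aux (P a e lam Q : ℝ) (hP : 0 < P) (ha : 1 < a) (he : 0 < e)
    (hlam : 1 < lam) (hQ : Q = (e * a + P) / (a * (lam - 1))) :
    C ((a - 1) + P / (e + Q)) = Real.log a + Real.log lam - C (e / Q) := by
  have ha0 : 0 < a := lt_trans one_pos ha
  have hlm : 0 < lam - 1 := by linarith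
  have hden : a * (lam - 1) ≠ 0 := by positivity
  have hQpos : 0 < Q := by
    rw [hQ]; apply div_pos (by nlinarith) (by positivity)
  have hQeq : Q * (a * (lam - 1)) = e * a + P := by
    rw [hQ]; field_simp
  have heQ : e + Q ≠ 0 := by positivity
  have hQne : Q ≠ 0 := ne_of_gt hQpos
  have harg : 1 + ((a - 1) + P / (e + Q)) = (a * lam) / (1 + e / Q) := by
    field_simp
    nlinarith [hQeq]
  have h1 : (0:ℝ) < 1 + e / Q := by positivity
  rw [C, C, harg, Real.log_div (by positivity) (ne_of_gt h1),
    Real.log_mul (ne_of_gt ha0) (by linarith)]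

/-- For `k ∈ {1,2}`, let `λₖ > 1` and set `Qₖ = (eₖaₖ + Pₖ)/(aₖ(λₖ - 1))`.
If `λ₁λ₂ = λs`, then `I₁ + I₃ = I₅`: the sum-rate constraint of the QF-JD rate
region holds with equality under this quantization choice. -/
theorem stmt_4 (P₁ P₂ Pr α : ℝ) (M N : ℕ)
    (dd1 dd2 ddr dr1 dr2 : ℝ)
    (hP₁ : 0 < P₁) (hP₂ : 0 < P₂) (hPr : 0 < Pr) (hα : 0 < α)
    (hMN : N < M) (hN : 1 ≤ N)
    (hdd1 : 0 < dd1) (hdd2 : 0 < dd2) (hddr : 0 < ddr)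
    (hdr1 : 0 < dr1) (hdr2 : 0 < dr2)
    (lams a₁ a₂ e₁ e₂ : ℝ)
    (hlams : lams = (1 + Pr * ((M : ℝ) - N) / (N * ddr ^ α)) ^ N)
    (ha₁ : a₁ = 1 + P₁ * ((M : ℝ) - N) / dd1 ^ α)
    (ha₂ : a₂ = 1 + P₂ * ((M : ℝ) - N) / dd2 ^ α)
    (he₁ : e₁ = dr1 ^ α / N) (he₂ : e₂ = dr2 ^ α / N)
    (lam₁ lam₂ : ℝ) (hlam₁ : 1 < lam₁) (hlam₂ : 1 < lam₂)
    (Q₁ Q₂ : ℝ)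
    (hQ₁ : Q₁ = (e₁ * a₁ + P₁) / (a₁ * (lam₁ - 1)))
    (hQ₂ : Q₂ = (e₂ * a₂ + P₂) / (a₂ * (lam₂ - 1)))
    (hprod : lam₁ * lam₂ = lams) :
    let ζ := (N : ℝ) * C (Pr * ((M : ℝ) - N) / (N * ddr ^ α))
      - C (dr1 ^ α / (N * Q₁)) - C (dr2 ^ α / (N * Q₂))
    let I₁ := C (P₁ * ((M : ℝ) - N) / dd1 ^ α + P₁ / (dr1 ^ α / N + Q₁))
    let I₃ := C (P₂ * ((M : ℝ) - N) / dd2 ^ α + P₂ / (dr2 ^ α / N + Q₂))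
    let I₅ := C (P₁ * ((M : ℝ) - N) / dd1 ^ α)
      + C (P₂ * ((M : ℝ) - N) / dd2 ^ α) + ζ
    I₁ + I₃ = I₅ := by
  intro ζ I₁ I₃ I₅
  have hNpos : (0:ℝ) < N := by exact_mod_cast lt_of_lt_of_le one_pos hN
  have hNne : (N:ℝ) ≠ 0 := ne_of_gt hNpos
  have hMNr : (0:ℝ) < (M:ℝ) - N := by
    have : (N:ℝ) < M := by exact_mod_cast hMN
    linarith
  have hp1 : (0:ℝ) < dd1 ^ α := Real.rpow_pos_of_pos hdd1 α
  have hp2 : (0:ℝ) < dd2 ^ α := Real.rpow_pos_of_pos hdd2 α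
  have hpr1 : (0:ℝ) < dr1 ^ α := Real.rpow_pos_of_pos hdr1 α
  have hpr2 : (0:ℝ) < dr2 ^ α := Real.rpow_pos_of_pos hdr2 α
  have hpdr : (0:ℝ) < ddr ^ α := Real.rpow_pos_of_pos hddr α
  have ha₁' : 1 < a₁ := by
    rw [ha₁]; nlinarith [div_pos (mul_pos hP₁ hMNr) hp1]
  have ha₂' : 1 < a₂ := by
    rw [ha₂]; nlinarith [div_pos (mul_pos hP₂ hMNr) hp2]
  have he₁' : 0 < e₁ := by rw [he₁]; positivity
  have he₂' : 0 < e₂ := by rw [he₂]; positivity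
  have hk1 := key_aux P₁ a₁ e₁ lam₁ Q₁ hP₁ ha₁' he₁' hlam₁ hQ₁
  have hk2 := key_aux P₂ a₂ e₂ lam₂ Q₂ hP₂ ha₂' he₂' hlam₂ hQ₂
  have harg1 : P₁ * ((M : ℝ) - N) / dd1 ^ α + P₁ / (dr1 ^ α / N + Q₁)
      = (a₁ - 1) + P₁ / (e₁ + Q₁) := by rw [ha₁, he₁]; ring
  have harg2 : P₂ * ((M : ℝ) - N) / dd2 ^ α + P₂ / (dr2 ^ α / N + Q₂)
      = (a₂ - 1) + P₂ / (e₂ + Q₂) := by rw [ha₂, he₂]; ring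
  have hq1 : dr1 ^ α / ((N:ℝ) * Q₁) = e₁ / Q₁ := by rw [he₁, div_div]
  have hq2 : dr2 ^ α / ((N:ℝ) * Q₂) = e₂ / Q₂ := by rw [he₂, div_div]
  have hy : (0:ℝ) < Pr * ((M : ℝ) - N) / (N * ddr ^ α) := by positivity
  have hlog : Real.log lam₁ + Real.log lam₂
      = (N : ℝ) * C (Pr * ((M : ℝ) - N) / (N * ddr ^ α)) := by
    rw [← Real.log_mul (by linarith) (by linarith), hprod, hlams, C,
      Real.log_pow]
  show C (P₁ * ((M : ℝ) - N) / dd1 ^ α + P₁ / (dr1 ^ α / N + Q₁))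
      + C (P₂ * ((M : ℝ) - N) / dd2 ^ α + P₂ / (dr2 ^ α / N + Q₂)) = _
  rw [harg1, harg2, hk1, hk2]
  show _ = C (P₁ * ((M : ℝ) - N) / dd1 ^ α) + C (P₂ * ((M : ℝ) - N) / dd2 ^ α)
      + ((N : ℝ) * C (Pr * ((M : ℝ) - N) / (N * ddr ^ α))
        - C (dr1 ^ α / (N * Q₁)) - C (dr2 ^ α / (N * Q₂)))
  rw [hq1, hq2, ← hlog]
  have hca1 : C (P₁ * ((M : ℝ) - N) / dd1 ^ α) = Real.log a₁ := by rw [C, ha₁]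
  have hca2 : C (P₂ * ((M : ℝ) - N) / dd2 ^ α) = Real.log a₂ := by rw [C, ha₂]
  rw [hca1, hca2]; ring
end

section
/- For k ∈ {1,2}, let λ_k > 1 and set Q_k = (e_k·a_k + P_k)/(a_k·(λ_k − 1)). Then the per-user rate expression satisfies the identity C(P_k(M−N)/d_{dk}^α + P_k/(e_k + Q_k)) = C(P_k(M−N)/d_{dk}^α) + C(P_k(M−N)/d_{dk}^α + P_k·N/d_{rk}^α) − C(P_k(M−N)/d_{dk}^α + P_k·N/(λ_k·d_{rk}^α)). -/
lemma key (P b e lam : ℝ) (hP : 0 < P) (hb : 0 ≤ b) (he : 0 < e) (hlam : 1 < lam) :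
    C (b + P / (e + (e * (1 + b) + P) / ((1 + b) * (lam - 1)))) =
      C b + C (b + P / e) - C (b + P / (lam * e)) := by
  have ha : (0:ℝ) < 1 + b := by linarith
  have hl : (0:ℝ) < lam - 1 := by linarith
  have hQ : 0 < (e * (1 + b) + P) / ((1 + b) * (lam - 1)) := by positivity
  have hden : 0 < e + (e * (1 + b) + P) / ((1 + b) * (lam - 1)) := by linarith
  have h1 : (0:ℝ) < 1 + (b + P / e) := by positivity
  have h2 : (0:ℝ) < 1 + (b + P / (lam * e)) := by positivity
  have hk : 1 + (b + P / (e + (e * (1 + b) + P) / ((1 + b) * (lam - 1)))) =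
      (1 + b) * (1 + (b + P / e)) / (1 + (b + P / (lam * e))) := by
    field_simp
    ring
  unfold C
  rw [hk, Real.log_div (by positivity) (by positivity), Real.log_mul (by positivity) (by positivity)]

lemma part (P α : ℝ) (M N : ℕ) (dd dr : ℝ)
    (hP : 0 < P) (hα : 0 < α) (hMN : N < M) (hN : 1 ≤ N)
    (hdd : 0 < dd) (hdr : 0 < dr) (a e lam Q : ℝ)
    (ha : a = 1 + P * ((M : ℝ) - N) / dd ^ α)
    (he : e = dr ^ α / N) (hlam : 1 < lam)
    (hQ : Q = (e * a + P) / (a * (lam - 1))) :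
    C (P * ((M : ℝ) - N) / dd ^ α + P / (e + Q)) =
      C (P * ((M : ℝ) - N) / dd ^ α)
      + C (P * ((M : ℝ) - N) / dd ^ α + P * N / dr ^ α)
      - C (P * ((M : ℝ) - N) / dd ^ α + P * N / (lam * dr ^ α)) := by
  subst ha he hQ
  have hNp : (0:ℝ) < N := by exact_mod_cast Nat.lt_of_lt_of_le Nat.zero_lt_one hN
  have hMNr : (0:ℝ) ≤ (M : ℝ) - N := by
    have : (N:ℝ) ≤ M := by exact_mod_cast hMN.le
    linarith
  have hb : 0 ≤ P * ((M : ℝ) - N) / dd ^ α := by positivity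
  have he' : 0 < dr ^ α / N := by positivity
  have h1 : P * N / dr ^ α = P / (dr ^ α / N) := by
    field_simp
  have h2 : P * N / (lam * dr ^ α) = P / (lam * (dr ^ α / N)) := by
    have hl0 : lam ≠ 0 := by positivity
    field_simp
  rw [h1, h2]
  exact key P _ _ lam hP hb he' hlam

/-- For `k ∈ {1,2}`, let `λₖ > 1` and set `Qₖ = (eₖaₖ + Pₖ)/(aₖ(λₖ - 1))`. Then
`C(Pₖ(M-N)/d_{dk}^α + Pₖ/(eₖ + Qₖ)) = C(Pₖ(M-N)/d_{dk}^α)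
  + C(Pₖ(M-N)/d_{dk}^α + PₖN/d_{rk}^α) - C(Pₖ(M-N)/d_{dk}^α + PₖN/(λₖ d_{rk}^α))`. -/
theorem stmt_5 (P₁ P₂ α : ℝ) (M N : ℕ)
    (dd1 dd2 dr1 dr2 : ℝ)
    (hP₁ : 0 < P₁) (hP₂ : 0 < P₂) (hα : 0 < α)
    (hMN : N < M) (hN : 1 ≤ N)
    (hdd1 : 0 < dd1) (hdd2 : 0 < dd2) (hdr1 : 0 < dr1) (hdr2 : 0 < dr2)
    (a₁ a₂ e₁ e₂ : ℝ)
    (ha₁ : a₁ = 1 + P₁ * ((M : ℝ) - N) / dd1 ^ α)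
    (ha₂ : a₂ = 1 + P₂ * ((M : ℝ) - N) / dd2 ^ α)
    (he₁ : e₁ = dr1 ^ α / N) (he₂ : e₂ = dr2 ^ α / N)
    (lam₁ lam₂ : ℝ) (hlam₁ : 1 < lam₁) (hlam₂ : 1 < lam₂)
    (Q₁ Q₂ : ℝ)
    (hQ₁ : Q₁ = (e₁ * a₁ + P₁) / (a₁ * (lam₁ - 1)))
    (hQ₂ : Q₂ = (e₂ * a₂ + P₂) / (a₂ * (lam₂ - 1))) :
    (C (P₁ * ((M : ℝ) - N) / dd1 ^ α + P₁ / (e₁ + Q₁)) =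
      C (P₁ * ((M : ℝ) - N) / dd1 ^ α)
      + C (P₁ * ((M : ℝ) - N) / dd1 ^ α + P₁ * N / dr1 ^ α)
      - C (P₁ * ((M : ℝ) - N) / dd1 ^ α + P₁ * N / (lam₁ * dr1 ^ α))) ∧
    (C (P₂ * ((M : ℝ) - N) / dd2 ^ α + P₂ / (e₂ + Q₂)) =
      C (P₂ * ((M : ℝ) - N) / dd2 ^ α)
      + C (P₂ * ((M : ℝ) - N) / dd2 ^ α + P₂ * N / dr2 ^ α)
      - C (P₂ * ((M : ℝ) - N) / dd2 ^ α + P₂ * N / (lam₂ * dr2 ^ α))) :=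
  ⟨part P₁ α M N dd1 dr1 hP₁ hα hMN hN hdd1 hdr1 a₁ e₁ lam₁ Q₁ ha₁ he₁ hlam₁ hQ₁,
   part P₂ α M N dd2 dr2 hP₂ hα hMN hN hdd2 hdr2 a₂ e₂ lam₂ Q₂ ha₂ he₂ hlam₂ hQ₂⟩
end

section
/- Let μ1, μ2 ∈ (0,1) with μ1 + μ2 = 1, let b_k = P_k·N/d_{rk}^α, and consider G(λ1) = μ1·log(a1 + b1/λ1) + μ2·log(a2 + b2·(λ1/λs)) on the interval [1, λs], where λs > 1. Set A = μ2·P2·(d_{r1}^α/N)·a1, B = (μ1 − μ2)·P1·P2, C = −μ1·P1·(d_{r2}^α/N)·a2·λs, λo = (B + √(B² − 4AC))/(2A), and λ1* = min{max{λo, 1}, λs}. Then A > 0, C < 0, B² − 4AC > 0, and λ1* is a global minimizer of G over [1, λs] (i.e., G(λ1*) ≤ G(λ) for all λ ∈ [1, λs]). -/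
set_option maxHeartbeats 1000000


/-- Let `μ₁, μ₂ ∈ (0,1)` with `μ₁ + μ₂ = 1`, `bₖ = PₖN/d_{rk}^α`, and consider
`G(λ₁) = μ₁ log(a₁ + b₁/λ₁) + μ₂ log(a₂ + b₂λ₁/λs)` on `[1, λs]` where `λs > 1`.
With `A = μ₂P₂(d_{r1}^α/N)a₁`, `B = (μ₁-μ₂)P₁P₂`, `C = -μ₁P₁(d_{r2}^α/N)a₂λs`,
`λo = (B + √(B² - 4AC))/(2A)` and `λ₁* = min{max{λo,1}, λs}`: then `A > 0`,
`C < 0`, `B² - 4AC > 0`, and `λ₁*` is a global minimizer of `G` over `[1, λs]`. -/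
theorem stmt_9 (P₁ P₂ Pr α : ℝ) (M N : ℕ)
    (dd1 dd2 ddr dr1 dr2 : ℝ)
    (hP₁ : 0 < P₁) (hP₂ : 0 < P₂) (hPr : 0 < Pr) (hα : 0 < α)
    (hMN : N < M) (hN : 1 ≤ N)
    (hdd1 : 0 < dd1) (hdd2 : 0 < dd2) (hddr : 0 < ddr)
    (hdr1 : 0 < dr1) (hdr2 : 0 < dr2)
    (μ₁ μ₂ : ℝ) (hμ₁ : μ₁ ∈ Set.Ioo (0:ℝ) 1) (hμ₂ : μ₂ ∈ Set.Ioo (0:ℝ) 1)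
    (hμ : μ₁ + μ₂ = 1)
    (lams a₁ a₂ b₁ b₂ A B Cc lamo lam₁star : ℝ)
    (hlams : lams = (1 + Pr * ((M : ℝ) - N) / (N * ddr ^ α)) ^ N)
    (hlams1 : 1 < lams)
    (ha₁ : a₁ = 1 + P₁ * ((M : ℝ) - N) / dd1 ^ α)
    (ha₂ : a₂ = 1 + P₂ * ((M : ℝ) - N) / dd2 ^ α)
    (hb₁ : b₁ = P₁ * N / dr1 ^ α) (hb₂ : b₂ = P₂ * N / dr2 ^ α)
    (hA : A = μ₂ * P₂ * (dr1 ^ α / N) * a₁)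
    (hB : B = (μ₁ - μ₂) * P₁ * P₂)
    (hCc : Cc = -(μ₁ * P₁ * (dr2 ^ α / N) * a₂ * lams))
    (hlamo : lamo = (B + Real.sqrt (B ^ 2 - 4 * A * Cc)) / (2 * A))
    (hlam₁star : lam₁star = min (max lamo 1) lams)
    (G : ℝ → ℝ)
    (hG : ∀ x : ℝ, G x = μ₁ * Real.log (a₁ + b₁ / x)
      + μ₂ * Real.log (a₂ + b₂ * (x / lams))) :
    0 < A ∧ Cc < 0 ∧ 0 < B ^ 2 - 4 * A * Cc ∧
    ∀ x ∈ Set.Icc (1:ℝ) lams, G lam₁star ≤ G x := by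
  obtain ⟨hμ₁0, hμ₁1⟩ := hμ₁
  obtain ⟨hμ₂0, hμ₂1⟩ := hμ₂
  have hGeq : G = fun x : ℝ => μ₁ * Real.log (a₁ + b₁ / x)
      + μ₂ * Real.log (a₂ + b₂ * (x / lams)) := funext hG
  subst hGeq
  have hn : (0:ℝ) < N := by
    have : 1 ≤ (N:ℝ) := by exact_mod_cast hN
    linarith
  have hMNr : (0:ℝ) < (M:ℝ) - N := by
    have : (N:ℝ) < M := by exact_mod_cast hMN
    linarith
  have hp1 : (0:ℝ) < dr1 ^ α := Real.rpow_pos_of_pos hdr1 α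
  have hp2 : (0:ℝ) < dr2 ^ α := Real.rpow_pos_of_pos hdr2 α
  have hpd1 : (0:ℝ) < dd1 ^ α := Real.rpow_pos_of_pos hdd1 α
  have hpd2 : (0:ℝ) < dd2 ^ α := Real.rpow_pos_of_pos hdd2 α
  have ha1p : 0 < a₁ := by
    rw [ha₁]
    have := div_pos (mul_pos hP₁ hMNr) hpd1
    linarith
  have ha2p : 0 < a₂ := by
    rw [ha₂]
    have := div_pos (mul_pos hP₂ hMNr) hpd2
    linarith
  have hb1p : 0 < b₁ := by rw [hb₁]; exact div_pos (mul_pos hP₁ hn) hp1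
  have hb2p : 0 < b₂ := by rw [hb₂]; exact div_pos (mul_pos hP₂ hn) hp2
  have hlams0 : (0:ℝ) < lams := lt_trans one_pos hlams1
  have hApos : 0 < A := by
    rw [hA]
    exact mul_pos (mul_pos (mul_pos hμ₂0 hP₂) (div_pos hp1 hn)) ha1p
  have hCneg : Cc < 0 := by
    rw [hCc]
    have : 0 < μ₁ * P₁ * (dr2 ^ α / N) * a₂ * lams :=
      mul_pos (mul_pos (mul_pos (mul_pos hμ₁0 hP₁) (div_pos hp2 hn)) ha2p) hlams0
    linarith
  have hdisc : 0 < B ^ 2 - 4 * A * Cc := by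
    linarith [sq_nonneg B, mul_pos hApos (neg_pos.2 hCneg)]
  refine ⟨hApos, hCneg, hdisc, ?_⟩
  set s := Real.sqrt (B ^ 2 - 4 * A * Cc) with hs
  have hs0 : 0 ≤ s := Real.sqrt_nonneg _
  have hs2 : s ^ 2 = B ^ 2 - 4 * A * Cc := Real.sq_sqrt hdisc.le
  have hBle : B ^ 2 ≤ B ^ 2 - 4 * A * Cc := by
    linarith [mul_pos hApos (neg_pos.2 hCneg)]
  have habs : |B| ≤ s := by
    rw [hs, ← Real.sqrt_sq_eq_abs]
    exact Real.sqrt_le_sqrt hBle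
  have hsB : B ≤ s := le_trans (le_abs_self B) habs
  have hsmB : -B ≤ s := le_trans (neg_le_abs B) habs
  have hspos : 0 < s := by rw [hs]; exact Real.sqrt_pos.mpr hdisc
  have h2A : 2 * A * lamo = B + s := by
    rw [hlamo]
    field_simp
  have hlamo0 : 0 < lamo := by
    rw [hlamo]
    apply div_pos _ (by linarith)
    have habs' : |B| < s := by
      rw [hs, ← Real.sqrt_sq_eq_abs]
      exact Real.sqrt_lt_sqrt (sq_nonneg B) (by linarith [mul_pos hApos (neg_pos.2 hCneg)])
    linarith [neg_le_abs B]
  have hqo : A * lamo ^ 2 - B * lamo + Cc = 0 := by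
    have h3 : 4 * A * (A * lamo ^ 2 - B * lamo + Cc) = 0 := by
      linear_combination hs2 + (2 * A * lamo - B + s) * h2A
    rcases mul_eq_zero.mp h3 with h | h
    · exfalso; linarith
    · exact h
  have hAlB : 0 ≤ A * lamo - B := by linarith
  have hqneg : ∀ x : ℝ, 0 ≤ x → x ≤ lamo → A * x ^ 2 - B * x + Cc ≤ 0 := by
    intro x hx0 hxl
    have h1 : 0 ≤ A * x + A * lamo - B := by
      have := mul_nonneg hApos.le hx0
      linarith
    linarith [mul_nonneg (sub_nonneg.2 hxl) h1, hqo]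
  have hqpos : ∀ x : ℝ, lamo ≤ x → 0 ≤ A * x ^ 2 - B * x + Cc := by
    intro x hxl
    have h1 : 0 ≤ A * x + A * lamo - B := by
      have := mul_le_mul_of_nonneg_left hxl hApos.le
      linarith
    linarith [mul_nonneg (sub_nonneg.2 hxl) h1, hqo]
  -- denominators
  have hden1 : ∀ x : ℝ, 0 < x → 0 < a₁ + b₁ / x := by
    intro x hx
    have := div_pos hb1p hx
    linarith
  have hden2 : ∀ x : ℝ, 0 < x → 0 < a₂ + b₂ * (x / lams) := by
    intro x hx
    have := mul_pos hb2p (div_pos hx hlams0)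
    linarith
  have hden1' : ∀ x : ℝ, 0 < x → 0 < a₁ * x ^ 2 + b₁ * x := by
    intro x hx
    have h1 := mul_pos ha1p (pow_pos hx 2)
    have h2 := mul_pos hb1p hx
    linarith
  have hden2' : ∀ x : ℝ, 0 < x → 0 < a₂ * lams + b₂ * x := by
    intro x hx
    have h1 := mul_pos ha2p hlams0
    have h2 := mul_pos hb2p hx
    linarith
  -- derivative
  set g' : ℝ → ℝ := fun x => μ₁ * ((b₁ * -(x ^ 2)⁻¹) / (a₁ + b₁ / x))
      + μ₂ * ((b₂ * (1 / lams)) / (a₂ + b₂ * (x / lams))) with hg'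
  have hder : ∀ x : ℝ, 0 < x →
      HasDerivAt (fun x : ℝ => μ₁ * Real.log (a₁ + b₁ / x)
        + μ₂ * Real.log (a₂ + b₂ * (x / lams))) (g' x) x := by
    intro x hx
    have h1 : HasDerivAt (fun y : ℝ => a₁ + b₁ / y) (b₁ * -(x ^ 2)⁻¹) x := by
      simpa [div_eq_mul_inv] using ((hasDerivAt_inv hx.ne').const_mul b₁).const_add a₁
    have h2 : HasDerivAt (fun y : ℝ => μ₁ * Real.log (a₁ + b₁ / y))
        (μ₁ * ((b₁ * -(x ^ 2)⁻¹) / (a₁ + b₁ / x))) x :=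
      (h1.log (hden1 x hx).ne').const_mul μ₁
    have h3 : HasDerivAt (fun y : ℝ => a₂ + b₂ * (y / lams)) (b₂ * (1 / lams)) x := by
      simpa using (((hasDerivAt_id x).div_const lams).const_mul b₂).const_add a₂
    have h4 : HasDerivAt (fun y : ℝ => μ₂ * Real.log (a₂ + b₂ * (y / lams)))
        (μ₂ * ((b₂ * (1 / lams)) / (a₂ + b₂ * (x / lams)))) x :=
      (h3.log (hden2 x hx).ne').const_mul μ₂
    exact h2.add h4
  -- cross-multiplied comparison
  have key : ∀ x : ℝ, (N:ℝ) * (A * x ^ 2 - B * x + Cc)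
      = μ₂ * P₂ * dr1 ^ α * a₁ * x ^ 2 - (μ₁ - μ₂) * P₁ * P₂ * N * x
        - μ₁ * P₁ * dr2 ^ α * a₂ * lams := by
    intro x
    rw [hA, hB, hCc]
    field_simp
    ring
  have expand : ∀ x : ℝ, μ₁ * b₁ * (a₂ * lams + b₂ * x) - μ₂ * b₂ * (a₁ * x ^ 2 + b₁ * x)
      = ((N:ℝ) / (dr1 ^ α * dr2 ^ α)) * (μ₁ * P₁ * dr2 ^ α * a₂ * lams
        + (μ₁ - μ₂) * P₁ * P₂ * N * x - μ₂ * P₂ * dr1 ^ α * a₁ * x ^ 2) := by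
    intro x
    rw [hb₁, hb₂]
    field_simp
    ring
  -- derivative signs
  have hgle : ∀ x : ℝ, 0 < x → x ≤ lamo → g' x ≤ 0 := by
    intro x hx hxl
    have hq := hqneg x hx.le hxl
    have hq2 : 0 ≤ μ₁ * P₁ * dr2 ^ α * a₂ * lams + (μ₁ - μ₂) * P₁ * P₂ * N * x
        - μ₂ * P₂ * dr1 ^ α * a₁ * x ^ 2 := by
      have h5 : (N:ℝ) * (A * x ^ 2 - B * x + Cc) ≤ 0 := by
        linarith [mul_nonneg hn.le (neg_nonneg.2 hq)]
      rw [key x] at h5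
      linarith
    have hcross : μ₂ * b₂ * (a₁ * x ^ 2 + b₁ * x) ≤ μ₁ * b₁ * (a₂ * lams + b₂ * x) := by
      have h6 : 0 ≤ μ₁ * b₁ * (a₂ * lams + b₂ * x) - μ₂ * b₂ * (a₁ * x ^ 2 + b₁ * x) := by
        rw [expand x]
        exact mul_nonneg (div_nonneg hn.le (mul_pos hp1 hp2).le) hq2
      linarith
    have e1 : μ₁ * ((b₁ * -(x ^ 2)⁻¹) / (a₁ + b₁ / x)) = -(μ₁ * b₁ / (a₁ * x ^ 2 + b₁ * x)) := by
      have hne : a₁ + b₁ / x ≠ 0 := (hden1 x hx).ne'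
      have hne' : a₁ * x ^ 2 + b₁ * x ≠ 0 := (hden1' x hx).ne'
      field_simp
    have e2 : μ₂ * ((b₂ * (1 / lams)) / (a₂ + b₂ * (x / lams)))
        = μ₂ * b₂ / (a₂ * lams + b₂ * x) := by
      have hne : a₂ + b₂ * (x / lams) ≠ 0 := (hden2 x hx).ne'
      have hne' : a₂ * lams + b₂ * x ≠ 0 := (hden2' x hx).ne'
      field_simp
    show μ₁ * ((b₁ * -(x ^ 2)⁻¹) / (a₁ + b₁ / x))
      + μ₂ * ((b₂ * (1 / lams)) / (a₂ + b₂ * (x / lams))) ≤ 0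
    rw [e1, e2]
    have hfinal : μ₂ * b₂ / (a₂ * lams + b₂ * x) ≤ μ₁ * b₁ / (a₁ * x ^ 2 + b₁ * x) :=
      (div_le_div_iff₀ (hden2' x hx) (hden1' x hx)).2 hcross
    linarith
  have hgge : ∀ x : ℝ, 0 < x → lamo ≤ x → 0 ≤ g' x := by
    intro x hxl'
    intro hxl
    have hx : 0 < x := hxl'
    have hq := hqpos x hxl
    have hq2 : μ₁ * P₁ * dr2 ^ α * a₂ * lams + (μ₁ - μ₂) * P₁ * P₂ * N * x
        - μ₂ * P₂ * dr1 ^ α * a₁ * x ^ 2 ≤ 0 := by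
      have h5 : 0 ≤ (N:ℝ) * (A * x ^ 2 - B * x + Cc) := mul_nonneg hn.le hq
      rw [key x] at h5
      linarith
    have hcross : μ₁ * b₁ * (a₂ * lams + b₂ * x) ≤ μ₂ * b₂ * (a₁ * x ^ 2 + b₁ * x) := by
      have h6 : μ₁ * b₁ * (a₂ * lams + b₂ * x) - μ₂ * b₂ * (a₁ * x ^ 2 + b₁ * x) ≤ 0 := by
        rw [expand x]
        exact mul_nonpos_of_nonneg_of_nonpos (div_nonneg hn.le (mul_pos hp1 hp2).le) hq2
      linarith
    have e1 : μ₁ * ((b₁ * -(x ^ 2)⁻¹) / (a₁ + b₁ / x)) = -(μ₁ * b₁ / (a₁ * x ^ 2 + b₁ * x)) := by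
      have hne : a₁ + b₁ / x ≠ 0 := (hden1 x hx).ne'
      have hne' : a₁ * x ^ 2 + b₁ * x ≠ 0 := (hden1' x hx).ne'
      field_simp
    have e2 : μ₂ * ((b₂ * (1 / lams)) / (a₂ + b₂ * (x / lams)))
        = μ₂ * b₂ / (a₂ * lams + b₂ * x) := by
      have hne : a₂ + b₂ * (x / lams) ≠ 0 := (hden2 x hx).ne'
      have hne' : a₂ * lams + b₂ * x ≠ 0 := (hden2' x hx).ne'
      field_simp
    show 0 ≤ μ₁ * ((b₁ * -(x ^ 2)⁻¹) / (a₁ + b₁ / x))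
      + μ₂ * ((b₂ * (1 / lams)) / (a₂ + b₂ * (x / lams)))
    rw [e1, e2]
    have hfinal : μ₁ * b₁ / (a₁ * x ^ 2 + b₁ * x) ≤ μ₂ * b₂ / (a₂ * lams + b₂ * x) :=
      (div_le_div_iff₀ (hden1' x hx) (hden2' x hx)).2 hcross
    linarith
  -- monotonicity on the two pieces
  have ht1 : 1 ≤ lam₁star := by
    rw [hlam₁star]
    exact le_min (le_max_right _ _) hlams1.le
  have htL : lam₁star ≤ lams := by rw [hlam₁star]; exact min_le_right _ _
  have hanti : AntitoneOn (fun x : ℝ => μ₁ * Real.log (a₁ + b₁ / x)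
      + μ₂ * Real.log (a₂ + b₂ * (x / lams))) (Set.Icc 1 lam₁star) := by
    apply antitoneOn_of_deriv_nonpos (convex_Icc _ _)
    · intro x hx
      exact (hder x (by linarith [hx.1])).continuousAt.continuousWithinAt
    · intro x hx
      rw [interior_Icc] at hx
      exact (hder x (by linarith [hx.1])).differentiableAt.differentiableWithinAt
    · intro x hx
      rw [interior_Icc] at hx
      obtain ⟨hx1, hx2⟩ := hx
      have hx0 : (0:ℝ) < x := by linarith
      have hxm : x < max lamo 1 := lt_of_lt_of_le hx2 (by rw [hlam₁star]; exact min_le_left _ _)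
      have hxlo : x ≤ lamo := by
        rcases le_or_gt lamo 1 with h | h
        · rw [max_eq_right h] at hxm; linarith
        · rw [max_eq_left h.le] at hxm; linarith
      rw [(hder x hx0).deriv]
      exact hgle x hx0 hxlo
  have hmono : MonotoneOn (fun x : ℝ => μ₁ * Real.log (a₁ + b₁ / x)
      + μ₂ * Real.log (a₂ + b₂ * (x / lams))) (Set.Icc lam₁star lams) := by
    apply monotoneOn_of_deriv_nonneg (convex_Icc _ _)
    · intro x hx
      exact (hder x (by linarith [hx.1])).continuousAt.continuousWithinAt
    · intro x hx
      rw [interior_Icc] at hx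
      exact (hder x (by linarith [hx.1])).differentiableAt.differentiableWithinAt
    · intro x hx
      rw [interior_Icc] at hx
      obtain ⟨hx1, hx2⟩ := hx
      have hx0 : (0:ℝ) < x := by linarith
      have hxlo : lamo ≤ x := by
        rcases min_cases (max lamo 1) lams with ⟨heq, _⟩ | ⟨heq, _⟩
        · have h1 : lamo ≤ lam₁star := by
            rw [hlam₁star, heq]; exact le_max_left _ _
          linarith
        · rw [hlam₁star, heq] at hx1
          linarith
      rw [(hder x hx0).deriv]
      exact hgge x hx0 hxlo
  intro x hx
  obtain ⟨hx1, hx2⟩ := hx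
  rcases le_total x lam₁star with h | h
  · exact hanti ⟨hx1, h⟩ ⟨ht1, le_refl _⟩ h
  · exact hmono ⟨le_refl _, htL⟩ ⟨h, hx2⟩ h
end

section
/- Let λs > 1 and let λ1, λ2 ∈ [1, λs] with λ1·λ2 = λs. Define β_k = log(λ_k)/log(λs) for k ∈ {1,2}. Then β1 + β2 = 1, each β_k ∈ [0,1], and λs^{β_k} = λ_k for k ∈ {1,2}. Consequently, choosing SCBS phase durations β_k and relay powers ρ_{rk} = β_k·Pr makes the QF-WZTD per-phase relay factor λ_{sk} = (1 + ρ_{rk}(M−N)/(β_k·N·d_{dr}^α))^{β_k·N} equal to λ_k whenever β_k > 0, where λs = (1 + Pr(M−N)/(N·d_{dr}^α))^N. -/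
/-- Let `λs > 1`, `λ₁, λ₂ ∈ [1, λs]` with `λ₁λ₂ = λs`, and
`βₖ = log λₖ / log λs`. Then `β₁ + β₂ = 1`, each `βₖ ∈ [0,1]`, and
`λs^{βₖ} = λₖ`. Consequently, with relay powers `ρ_{rk} = βₖ Pr`, the QF-WZTD
per-phase relay factor
`λ_{sk} = (1 + ρ_{rk}(M-N)/(βₖ N d_{dr}^α))^{βₖ N}` equals `λₖ` whenever
`βₖ > 0`, where `λs = (1 + Pr(M-N)/(N d_{dr}^α))^N`. -/
theorem stmt_10 (Pr α ddr : ℝ) (M N : ℕ)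
    (hPr : 0 < Pr) (hα : 0 < α) (hddr : 0 < ddr)
    (hMN : N < M) (hN : 1 ≤ N)
    (lams lam₁ lam₂ : ℝ)
    (hlams : lams = (1 + Pr * ((M : ℝ) - N) / (N * ddr ^ α)) ^ N)
    (hlams1 : 1 < lams)
    (hlam₁ : lam₁ ∈ Set.Icc 1 lams) (hlam₂ : lam₂ ∈ Set.Icc 1 lams)
    (hprod : lam₁ * lam₂ = lams)
    (β₁ β₂ ρ₁ ρ₂ : ℝ)
    (hβ₁ : β₁ = Real.log lam₁ / Real.log lams)
    (hβ₂ : β₂ = Real.log lam₂ / Real.log lams)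
    (hρ₁ : ρ₁ = β₁ * Pr) (hρ₂ : ρ₂ = β₂ * Pr) :
    β₁ + β₂ = 1 ∧ β₁ ∈ Set.Icc (0:ℝ) 1 ∧ β₂ ∈ Set.Icc (0:ℝ) 1 ∧
    lams ^ β₁ = lam₁ ∧ lams ^ β₂ = lam₂ ∧
    (0 < β₁ →
      (1 + ρ₁ * ((M : ℝ) - N) / (β₁ * N * ddr ^ α)) ^ (β₁ * N) = lam₁) ∧
    (0 < β₂ →
      (1 + ρ₂ * ((M : ℝ) - N) / (β₂ * N * ddr ^ α)) ^ (β₂ * N) = lam₂) := by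
  obtain ⟨h1l, h1u⟩ := hlam₁
  obtain ⟨h2l, h2u⟩ := hlam₂
  have hls : 0 < Real.log lams := Real.log_pos hlams1
  have h1p : (0:ℝ) < lam₁ := lt_of_lt_of_le one_pos h1l
  have h2p : (0:ℝ) < lam₂ := lt_of_lt_of_le one_pos h2l
  have hsum : Real.log lam₁ + Real.log lam₂ = Real.log lams := by
    rw [← Real.log_mul (ne_of_gt h1p) (ne_of_gt h2p), hprod]
  have hβsum : β₁ + β₂ = 1 := by
    rw [hβ₁, hβ₂, ← add_div, hsum, div_self (ne_of_gt hls)]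
  have hb1 : ∀ lam : ℝ, 1 ≤ lam → lam ≤ lams →
      Real.log lam / Real.log lams ∈ Set.Icc (0:ℝ) 1 := by
    intro lam hl hu
    constructor
    · exact div_nonneg (Real.log_nonneg hl) (le_of_lt hls)
    · rw [div_le_one hls]
      exact Real.log_le_log (lt_of_lt_of_le one_pos hl) hu
  have hrp : ∀ (lam β : ℝ), 0 < lam → β = Real.log lam / Real.log lams →
      lams ^ β = lam := by
    intro lam β hp hβ
    rw [Real.rpow_def_of_pos (lt_trans one_pos hlams1), hβ,
      mul_div_cancel₀ _ (ne_of_gt hls), Real.exp_log hp]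
  have hbase : (0:ℝ) < 1 + Pr * ((M : ℝ) - N) / (N * ddr ^ α) := by
    have hMNr : (0:ℝ) < (M : ℝ) - N := by
      have : (N:ℝ) < M := by exact_mod_cast hMN
      linarith
    have hNr : (0:ℝ) < (N:ℝ) := by exact_mod_cast hN
    have hd : (0:ℝ) < ddr ^ α := Real.rpow_pos_of_pos hddr α
    positivity
  have hphase : ∀ (lam β ρ : ℝ), 0 < lam → β = Real.log lam / Real.log lams →
      ρ = β * Pr → 0 < β →
      (1 + ρ * ((M : ℝ) - N) / (β * N * ddr ^ α)) ^ (β * N) = lam := by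
    intro lam β ρ hp hβ hρ hβp
    have hNr : (0:ℝ) < (N:ℝ) := by exact_mod_cast hN
    have hd : (0:ℝ) < ddr ^ α := Real.rpow_pos_of_pos hddr α
    have hbe : 1 + ρ * ((M : ℝ) - N) / (β * N * ddr ^ α)
        = 1 + Pr * ((M : ℝ) - N) / (N * ddr ^ α) := by
      rw [hρ]
      field_simp
    rw [hbe]
    have : (1 + Pr * ((M : ℝ) - N) / (N * ddr ^ α)) ^ (β * (N:ℝ))
        = ((1 + Pr * ((M : ℝ) - N) / (N * ddr ^ α)) ^ N) ^ β := by
      rw [mul_comm β ((N:ℕ):ℝ), Real.rpow_mul (le_of_lt hbase), Real.rpow_natCast]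
    rw [this, ← hlams]
    exact hrp lam β hp hβ
  exact ⟨hβsum, hβ₁ ▸ hb1 lam₁ h1l h1u, hβ₂ ▸ hb1 lam₂ h2l h2u,
    hβ₁ ▸ hrp lam₁ _ h1p rfl, hβ₂ ▸ hrp lam₂ _ h2p rfl,
    fun h => hphase lam₁ β₁ ρ₁ h1p hβ₁ hρ₁ h,
    fun h => hphase lam₂ β₂ ρ₂ h2p hβ₂ hρ₂ h⟩
end

section
/- Fix K ≥ 1 users with powers P_k > 0, distances d_{dk}, d_{rk} > 0, and let λ_k > 1 with Π_{k=1}^K λ_k = λs, where λs = (1 + Pr(M−N)/(N·d_{dr}^α))^N. Set Q_k = (e_k·a_k + P_k)/(a_k·(λ_k − 1)) with a_k = 1 + P_k(M−N)/d_{dk}^α and e_k = d_{rk}^α/N. Then Σ_{k=1}^K I_k = J_K, where I_k = C(P_k(M−N)/d_{dk}^α + P_k/(e_k + Q_k)), J_K = Σ_{k=1}^K C(P_k(M−N)/d_{dk}^α) + ξ, and ξ = N·C(Pr(M−N)/(N·d_{dr}^α)) − Σ_{k=1}^K C(d_{rk}^α/(N·Q_k)); i.e., the full sum-rate constraint of the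 K-user QF-JD rate region holds with equality. -/
/-- `K`-user version of the sum-rate equality: with `λₖ > 1`, `Πₖ λₖ = λs`, and
`Qₖ = (eₖaₖ + Pₖ)/(aₖ(λₖ - 1))`, one has `Σₖ Iₖ = J_K`, i.e. the full sum-rate
constraint of the `K`-user QF-JD rate region holds with equality. -/
theorem stmt_15 (K : ℕ) (hK : 1 ≤ K) (Pr α ddr : ℝ) (M N : ℕ)
    (hPr : 0 < Pr) (hα : 0 < α) (hddr : 0 < ddr)
    (hMN : N < M) (hN : 1 ≤ N)
    (P dd dr a e lam Q : Fin K → ℝ)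
    (hP : ∀ k, 0 < P k) (hdd : ∀ k, 0 < dd k) (hdr : ∀ k, 0 < dr k)
    (lams : ℝ)
    (hlams : lams = (1 + Pr * ((M : ℝ) - N) / (N * ddr ^ α)) ^ N)
    (ha : ∀ k, a k = 1 + P k * ((M : ℝ) - N) / dd k ^ α)
    (he : ∀ k, e k = dr k ^ α / N)
    (hlam : ∀ k, 1 < lam k) (hprod : ∏ k, lam k = lams)
    (hQ : ∀ k, Q k = (e k * a k + P k) / (a k * (lam k - 1))) :
    let ξ := (N : ℝ) * C (Pr * ((M : ℝ) - N) / (N * ddr ^ α))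
      - ∑ k, C (dr k ^ α / (N * Q k))
    (∑ k, C (P k * ((M : ℝ) - N) / dd k ^ α + P k / (e k + Q k))) =
      (∑ k, C (P k * ((M : ℝ) - N) / dd k ^ α)) + ξ := by
  intro ξ
  have hM : (N : ℝ) < M := by exact_mod_cast hMN
  have hNpos : (0 : ℝ) < N := by exact_mod_cast hN
  have hMN' : (0 : ℝ) < (M : ℝ) - N := by linarith
  -- per-k key facts
  have hepos : ∀ k, 0 < e k := by
    intro k
    rw [he k]
    exact div_pos (Real.rpow_pos_of_pos (hdr k) α) hNpos
  have hapos : ∀ k, 1 < a k := by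
    intro k
    rw [ha k]
    have h1 : 0 < P k * ((M : ℝ) - N) / dd k ^ α :=
      div_pos (mul_pos (hP k) hMN') (Real.rpow_pos_of_pos (hdd k) α)
    linarith
  have hQpos : ∀ k, 0 < Q k := by
    intro k
    rw [hQ k]
    have h1 : 0 < e k * a k + P k := by
      have := mul_pos (hepos k) (lt_trans one_pos (hapos k))
      linarith [hP k]
    have h2 : 0 < a k * (lam k - 1) := by
      have := hlam k
      have := hapos k
      nlinarith
    exact div_pos h1 h2
  have hkey : ∀ k, C (P k * ((M : ℝ) - N) / dd k ^ α + P k / (e k + Q k))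
      = C (P k * ((M : ℝ) - N) / dd k ^ α) + Real.log (lam k)
        - C (dr k ^ α / (N * Q k)) := by
    intro k
    have hek := hepos k
    have hak := hapos k
    have hQk := hQpos k
    have hlk := hlam k
    have heQ : 0 < e k + Q k := by linarith
    have hane : a k ≠ 0 := by positivity
    have hlne : lam k - 1 ≠ 0 := by linarith
    -- key algebraic identity: a*Q*(lam-1) = e*a + P
    have hAQ : a k * Q k * (lam k - 1) = e k * a k + P k := by
      rw [hQ k]
      field_simp
    have key : a k * lam k * Q k = a k * (Q k + e k) + P k := by
      linear_combination hAQ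
    -- first arg
    have h1 : 1 + (P k * ((M : ℝ) - N) / dd k ^ α + P k / (e k + Q k))
        = a k * lam k * (Q k / (Q k + e k)) := by
      have hX : P k * ((M : ℝ) - N) / dd k ^ α = a k - 1 := by rw [ha k]; ring
      rw [hX]
      rw [show (1 : ℝ) + (a k - 1 + P k / (e k + Q k))
          = a k + P k / (e k + Q k) by ring]
      have hne : e k + Q k ≠ 0 := ne_of_gt heQ
      field_simp
      linear_combination -(e k + Q k) * key
    -- third arg
    have h3 : 1 + dr k ^ α / (N * Q k) = (Q k + e k) / Q k := by
      have : dr k ^ α = e k * N := by rw [he k]; field_simp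
      rw [this]
      field_simp
    unfold C
    rw [h1, h3, ← ha k]
    have hQe : Q k + e k ≠ 0 := by positivity
    have hQne : Q k ≠ 0 := ne_of_gt hQk
    have hane : a k ≠ 0 := by positivity
    have hlne : lam k ≠ 0 := by positivity
    rw [Real.log_mul (by positivity) (by positivity),
      Real.log_mul hane hlne, Real.log_div hQne hQe, Real.log_div hQe hQne]
    ring
  unfold ξ
  have hsum : ∑ k, Real.log (lam k)
      = (N : ℝ) * C (Pr * ((M : ℝ) - N) / (N * ddr ^ α)) := by
    rw [← Real.log_prod (fun k _ => ne_of_gt (lt_trans one_pos (hlam k))),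
      hprod, hlams, Real.log_pow]
    rfl
  rw [Finset.sum_congr rfl (fun k _ => hkey k)]
  rw [Finset.sum_sub_distrib, Finset.sum_add_distrib, hsum]
  ring
end

section
/- Let K ≥ 1, weights μ_k > 0 with Σ_{k=1}^K μ_k = 1, positive reals a_k, b_k, and λs > 1. Define ω_k = (a_k + b_k)/(μ_k·b_k) and assume (after relabeling) ω_1 ≤ ω_2 ≤ … ≤ ω_K. Let v* be the largest v ∈ {1,…,K} such that Π_{k=1}^{v}(ω_v − 1/μ_k) ≤ λs·Π_{k=1}^{v} a_k/(μ_k·b_k) (such v exists since the condition holds for v = 1). Let w > ω_{v*} be the unique real with Π_{k=1}^{v*}(w − 1/μ_k) = λs·Π_{k=1}^{v*} a_k/(μ_k·b_k), and define λ_k* = (μ_k·b_k/a_k)·(w − 1/μ_k) for k ≤ v* and λ_k* = 1 for k > v*. Then λ* is feasible (λ_k* ≥ 1 for all k and Π_{k=1}^K λ_k* = λs) and λ* is a global minimizer of Σ_{k=1}^K μ_k·log(a_k + b_k/λ_k) over the set {λ ∈ ℝ^K : λ_k ≥ 1 for all k, Π_{k=1}^K λ_k = λs}. -/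
open Finset

lemma key_concave (θ r : ℝ) (hθ0 : 0 < θ) (hθ1 : θ ≤ 1) (hr : 0 < r) :
    θ * Real.log r ≤ Real.log (θ * r + (1 - θ)) := by
  have hs : 0 < θ * r + (1 - θ) := by nlinarith
  have h1 : Real.log r - Real.log (θ * r + (1 - θ)) ≤ r / (θ * r + (1 - θ)) - 1 := by
    have h := Real.log_le_sub_one_of_pos (div_pos hr hs)
    rwa [Real.log_div hr.ne' hs.ne'] at h
  have h2 : -Real.log (θ * r + (1 - θ)) ≤ 1 / (θ * r + (1 - θ)) - 1 := by
    have h := Real.log_le_sub_one_of_pos (div_pos one_pos hs)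
    rwa [Real.log_div one_ne_zero hs.ne', Real.log_one, zero_sub] at h
  have e1 : θ * (r / (θ * r + (1 - θ)) - 1) + (1 - θ) * (1 / (θ * r + (1 - θ)) - 1) = 0 := by
    field_simp
    ring
  have A := mul_le_mul_of_nonneg_left h1 hθ0.le
  have B := mul_le_mul_of_nonneg_left h2 (by linarith : (0:ℝ) ≤ 1 - θ)
  linarith

lemma perk (μ a b w lam l : ℝ) (hμ : 0 < μ) (ha : 0 < a) (hb : 0 < b)
    (hw : 0 < w) (hlam : 0 < lam) (hl : 0 < l)
    (h1 : μ * b * w ≤ a * lam + b)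
    (h2 : a * lam + b = μ * b * w ∨ lam ≤ l) :
    μ * Real.log (a + b / lam) + (1 / w) * Real.log lam ≤
      μ * Real.log (a + b / l) + (1 / w) * Real.log l := by
  have hd : 0 < a * lam + b := by positivity
  have hdl : 0 < a * l + b := by positivity
  set θ := a * lam / (a * lam + b) with hθdef
  have hθ0 : 0 < θ := by positivity
  have hθ1 : θ ≤ 1 := by rw [hθdef, div_le_one hd]; linarith
  have hkey := key_concave θ (l / lam) hθ0 hθ1 (div_pos hl hlam)
  have hcomb : θ * (l / lam) + (1 - θ) = (a * l + b) / (a * lam + b) := by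
    rw [hθdef]; field_simp; ring
  rw [hcomb, Real.log_div hdl.ne' hd.ne', Real.log_div hl.ne' hlam.ne'] at hkey
  have e1 : a + b / lam = (a * lam + b) / lam := by field_simp
  have e2 : a + b / l = (a * l + b) / l := by field_simp
  rw [e1, e2, Real.log_div hd.ne' hlam.ne', Real.log_div hdl.ne' hl.ne']
  have h3 := mul_le_mul_of_nonneg_left hkey hμ.le
  have hθeq : μ * θ = μ - μ * b / (a * lam + b) := by
    rw [hθdef]; field_simp; ring
  have h4 : (μ - μ * b / (a * lam + b)) * (Real.log l - Real.log lam) ≤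
      μ * (Real.log (a * l + b) - Real.log (a * lam + b)) := by
    calc (μ - μ * b / (a * lam + b)) * (Real.log l - Real.log lam)
        = μ * (θ * (Real.log l - Real.log lam)) := by rw [← hθeq]; ring
      _ ≤ _ := h3
  rcases h2 with h2 | h2
  · have hceq : μ * b / (a * lam + b) = 1 / w := by
      rw [h2, div_eq_div_iff (by positivity) hw.ne']; ring
    rw [hceq] at h4
    linarith
  · have hfac : μ * b / (a * lam + b) ≤ 1 / w := by
      rw [div_le_div_iff₀ hd hw]; linarith
    have hD : 0 ≤ Real.log l - Real.log lam := by
      have := Real.log_le_log hlam h2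
      linarith
    have h6 : 0 ≤ (1 / w - μ * b / (a * lam + b)) * (Real.log l - Real.log lam) :=
      mul_nonneg (by linarith) hD
    linarith


open Finset in
/-- Water-filling solution of the `K`-user optimal quantization problem (users
indexed `1,…,K`). With `ωₖ = (aₖ+bₖ)/(μₖbₖ)` increasing in `k`, `v*` the largest
`v ∈ {1,…,K}` with `Π_{k≤v}(ω_v - 1/μₖ) ≤ λs·Π_{k≤v} aₖ/(μₖbₖ)`, and `w > ω_{v*}`
the unique real with `Π_{k≤v*}(w - 1/μₖ) = λs·Π_{k≤v*} aₖ/(μₖbₖ)`, the point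
`λₖ* = (μₖbₖ/aₖ)(w - 1/μₖ)` for `k ≤ v*` and `λₖ* = 1` otherwise is feasible and
globally minimizes `Σₖ μₖ log(aₖ + bₖ/λₖ)` subject to `λₖ ≥ 1`, `Πₖ λₖ = λs`. -/
theorem stmt_16 (K : ℕ) (hK : 1 ≤ K) (μ a b : ℕ → ℝ) (lams : ℝ)
    (hμpos : ∀ k ∈ Icc 1 K, 0 < μ k) (hμsum : ∑ k ∈ Icc 1 K, μ k = 1)
    (ha : ∀ k ∈ Icc 1 K, 0 < a k) (hb : ∀ k ∈ Icc 1 K, 0 < b k)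
    (hlams : 1 < lams)
    (ω : ℕ → ℝ) (hω : ∀ k ∈ Icc 1 K, ω k = (a k + b k) / (μ k * b k))
    (hmono : ∀ i ∈ Icc 1 K, ∀ j ∈ Icc 1 K, i ≤ j → ω i ≤ ω j)
    (vstar : ℕ) (hvstar : vstar ∈ Icc 1 K)
    (hcond : ∏ k ∈ Icc 1 vstar, (ω vstar - 1 / μ k) ≤
      lams * ∏ k ∈ Icc 1 vstar, a k / (μ k * b k))
    (hlargest : ∀ v ∈ Icc 1 K,
      (∏ k ∈ Icc 1 v, (ω v - 1 / μ k) ≤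
        lams * ∏ k ∈ Icc 1 v, a k / (μ k * b k)) → v ≤ vstar)
    (w : ℝ) (hw : ω vstar < w)
    (hweq : ∏ k ∈ Icc 1 vstar, (w - 1 / μ k) =
      lams * ∏ k ∈ Icc 1 vstar, a k / (μ k * b k))
    (lamstar : ℕ → ℝ)
    (hlamstar : ∀ k ∈ Icc 1 K,
      lamstar k = if k ≤ vstar then μ k * b k / a k * (w - 1 / μ k) else 1) :
    (∀ k ∈ Icc 1 K, 1 ≤ lamstar k) ∧
    (∏ k ∈ Icc 1 K, lamstar k = lams) ∧
    (∀ l : ℕ → ℝ, (∀ k ∈ Icc 1 K, 1 ≤ l k) → (∏ k ∈ Icc 1 K, l k = lams) →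
      ∑ k ∈ Icc 1 K, μ k * Real.log (a k + b k / lamstar k) ≤
        ∑ k ∈ Icc 1 K, μ k * Real.log (a k + b k / l k)) := by
  have hmemv : vstar ∈ Icc 1 K := hvstar
  simp only [mem_Icc] at hvstar
  obtain ⟨hv1, hvK⟩ := hvstar
  have hsub : ∀ k, k ∈ Icc 1 vstar → k ∈ Icc 1 K := by
    intro k hk; simp only [mem_Icc] at hk ⊢; omega
  have hωv : 0 < ω vstar := by
    rw [hω vstar hmemv]
    exact div_pos (by linarith [ha vstar hmemv, hb vstar hmemv])
      (mul_pos (hμpos vstar hmemv) (hb vstar hmemv))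
  have hw0 : 0 < w := hωv.trans hw
  have hwk : ∀ k ∈ Icc 1 vstar, ω k < w := by
    intro k hk
    have hkK := hsub k hk
    have h := hmono k hkK vstar hmemv (by simp only [mem_Icc] at hk; omega)
    linarith
  have hactive : ∀ k ∈ Icc 1 vstar,
      a k * lamstar k + b k = μ k * b k * w ∧ 1 ≤ lamstar k := by
    intro k hk
    have hkK := hsub k hk
    have hkle : k ≤ vstar := by simp only [mem_Icc] at hk; omega
    have hμk := hμpos k hkK; have hak := ha k hkK; have hbk := hb k hkK
    have hlk : lamstar k = μ k * b k / a k * (w - 1 / μ k) := by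
      rw [hlamstar k hkK, if_pos hkle]
    have hwgt : (a k + b k) / (μ k * b k) < w := by rw [← hω k hkK]; exact hwk k hk
    have hwgt' : a k + b k < w * (μ k * b k) := by
      rwa [div_lt_iff₀ (mul_pos hμk hbk)] at hwgt
    constructor
    · rw [hlk]; field_simp [hak.ne', hμk.ne']; ring
    · rw [hlk]
      have h9 : μ k * b k / a k * (w - 1 / μ k) = (μ k * b k * w - b k) / a k := by
        field_simp
      rw [h9, le_div_iff₀ hak]
      nlinarith
  have hinactive : ∀ k ∈ Icc 1 K, vstar < k → w ≤ ω k := by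
    intro k hkK hkgt
    simp only [mem_Icc] at hkK
    have hmem1 : vstar + 1 ∈ Icc 1 K := by simp only [mem_Icc]; omega
    have hstep : w ≤ ω (vstar + 1) := by
      by_contra hlt
      push_neg at hlt
      have hcondv : ∏ j ∈ Icc 1 (vstar + 1), (ω (vstar + 1) - 1 / μ j) ≤
          lams * ∏ j ∈ Icc 1 (vstar + 1), a j / (μ j * b j) := by
        rw [Finset.prod_Icc_succ_top (by omega : 1 ≤ vstar + 1),
            Finset.prod_Icc_succ_top (by omega : 1 ≤ vstar + 1)]
        have hμ1 := hμpos _ hmem1; have hb1 := hb _ hmem1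
        have hlast : ω (vstar + 1) - 1 / μ (vstar + 1) =
            a (vstar + 1) / (μ (vstar + 1) * b (vstar + 1)) := by
          rw [hω _ hmem1]; field_simp; ring
        have hstep1 : ∏ j ∈ Icc 1 vstar, (ω (vstar + 1) - 1 / μ j) ≤
            ∏ j ∈ Icc 1 vstar, (w - 1 / μ j) := by
          apply Finset.prod_le_prod
          · intro j hj
            have hjK := hsub j hj
            have hωj : ω j ≤ ω (vstar + 1) :=
              hmono j hjK _ hmem1 (by simp only [mem_Icc] at hj; omega)
            have hμj := hμpos j hjK; have hbj := hb j hjK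
            have hj2 : ω j - 1 / μ j = a j / (μ j * b j) := by
              rw [hω j hjK]; field_simp; ring
            have hj3 : 0 < a j / (μ j * b j) :=
              div_pos (ha j hjK) (mul_pos hμj hbj)
            linarith
          · intro j hj; linarith
        have hlastnn : 0 ≤ a (vstar + 1) / (μ (vstar + 1) * b (vstar + 1)) :=
          le_of_lt (div_pos (ha _ hmem1) (mul_pos hμ1 hb1))
        rw [hlast]
        calc (∏ j ∈ Icc 1 vstar, (ω (vstar + 1) - 1 / μ j)) *
              (a (vstar + 1) / (μ (vstar + 1) * b (vstar + 1)))
            ≤ (∏ j ∈ Icc 1 vstar, (w - 1 / μ j)) *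
              (a (vstar + 1) / (μ (vstar + 1) * b (vstar + 1))) :=
              mul_le_mul_of_nonneg_right hstep1 hlastnn
          _ = lams * ((∏ j ∈ Icc 1 vstar, a j / (μ j * b j)) *
              (a (vstar + 1) / (μ (vstar + 1) * b (vstar + 1)))) := by
              rw [hweq]; ring
      have := hlargest (vstar + 1) hmem1 hcondv
      omega
    have h := hmono (vstar + 1) hmem1 k (by simp only [mem_Icc]; omega) (by omega)
    linarith
  have part1 : ∀ k ∈ Icc 1 K, 1 ≤ lamstar k := by
    intro k hkK
    by_cases hkle : k ≤ vstar
    · exact (hactive k (by simp only [mem_Icc] at hkK ⊢; omega)).2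
    · rw [hlamstar k hkK, if_neg hkle]
  have hvals : ∀ k ∈ Icc 1 vstar, lamstar k * (a k / (μ k * b k)) = w - 1 / μ k := by
    intro k hk
    have hkK := hsub k hk
    have hkle : k ≤ vstar := by simp only [mem_Icc] at hk; omega
    rw [hlamstar k hkK, if_pos hkle]
    have hμk := hμpos k hkK; have hak := ha k hkK; have hbk := hb k hkK
    field_simp
  have hPpos : 0 < ∏ k ∈ Icc 1 vstar, a k / (μ k * b k) := by
    apply Finset.prod_pos
    intro k hk
    have hkK := hsub k hk
    exact div_pos (ha k hkK) (mul_pos (hμpos k hkK) (hb k hkK))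
  have hprodv : ∏ k ∈ Icc 1 vstar, lamstar k = lams := by
    have h10 : (∏ k ∈ Icc 1 vstar, lamstar k) * (∏ k ∈ Icc 1 vstar, a k / (μ k * b k)) =
        lams * ∏ k ∈ Icc 1 vstar, a k / (μ k * b k) := by
      rw [← Finset.prod_mul_distrib, Finset.prod_congr rfl hvals, hweq]
    exact mul_right_cancel₀ hPpos.ne' h10
  have part2 : ∏ k ∈ Icc 1 K, lamstar k = lams := by
    have hsplit : Icc 1 K = Icc 1 vstar ∪ Ioc vstar K := by
      ext x; simp only [mem_Icc, mem_union, mem_Ioc]; omega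
    have hdisj : Disjoint (Icc 1 vstar) (Ioc vstar K) := by
      simp only [Finset.disjoint_left, mem_Icc, mem_Ioc]
      intro x hx hx2
      omega
    rw [hsplit, Finset.prod_union hdisj, hprodv]
    have hone : ∏ k ∈ Ioc vstar K, lamstar k = 1 := by
      apply Finset.prod_eq_one
      intro k hk
      simp only [mem_Ioc] at hk
      rw [hlamstar k (by simp only [mem_Icc]; omega), if_neg (by omega)]
    rw [hone, mul_one]
  refine ⟨part1, part2, ?_⟩
  intro l hl hlprod
  have hlpos : ∀ k ∈ Icc 1 K, 0 < l k := fun k hk => lt_of_lt_of_le one_pos (hl k hk)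
  have hlampos : ∀ k ∈ Icc 1 K, 0 < lamstar k := fun k hk =>
    lt_of_lt_of_le one_pos (part1 k hk)
  have hsum : ∀ k ∈ Icc 1 K,
      μ k * Real.log (a k + b k / lamstar k) + (1 / w) * Real.log (lamstar k) ≤
      μ k * Real.log (a k + b k / l k) + (1 / w) * Real.log (l k) := by
    intro k hkK
    have hμk := hμpos k hkK; have hak := ha k hkK; have hbk := hb k hkK
    by_cases hkle : k ≤ vstar
    · have hkv : k ∈ Icc 1 vstar := by simp only [mem_Icc] at hkK ⊢; omega
      obtain ⟨heq, _⟩ := hactive k hkv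
      exact perk _ _ _ _ _ _ hμk hak hbk hw0 (hlampos k hkK) (hlpos k hkK)
        (le_of_eq heq.symm) (Or.inl heq)
    · have hlk1 : lamstar k = 1 := by rw [hlamstar k hkK, if_neg hkle]
      have hwle : w ≤ ω k := hinactive k hkK (by omega)
      have h1 : μ k * b k * w ≤ a k * lamstar k + b k := by
        rw [hlk1, mul_one]
        rw [hω k hkK, le_div_iff₀ (mul_pos hμk hbk)] at hwle
        nlinarith
      exact perk _ _ _ _ _ _ hμk hak hbk hw0 (hlampos k hkK) (hlpos k hkK) h1
        (Or.inr (by rw [hlk1]; exact hl k hkK))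
  have hsum2 := Finset.sum_le_sum hsum
  rw [Finset.sum_add_distrib, Finset.sum_add_distrib] at hsum2
  have hlog1 : ∑ k ∈ Icc 1 K, (1 / w) * Real.log (lamstar k) = (1 / w) * Real.log lams := by
    rw [← Finset.mul_sum, ← Real.log_prod (fun k hk => (hlampos k hk).ne'), part2]
  have hlog2 : ∑ k ∈ Icc 1 K, (1 / w) * Real.log (l k) = (1 / w) * Real.log lams := by
    rw [← Finset.mul_sum, ← Real.log_prod (fun k hk => (hlpos k hk).ne'), hlprod]
  linarith
end
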